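/- For all u₁, u₂, v ∈ I_{RC}, the label changer A^{RC;u₂u₁} := (d_R/|N_C|) Σ_{m∈N_C} conj(R^{j₂j₁}(m)) A^{q_{i₂} m q_{i₁}⁻¹} (with u₁ = (i₁,j₁), u₂ = (i₂,j₂)) satisfies A^{RC;u₂u₁} F^{RC;u₁v} Ω = F^{RC;u₂v} Ω. -/

import Mathlib

/-!
Pushing `A^{q_{i₂} m q_{i₁}⁻¹}` through `F^{c_{i₁}⁻¹, q_{i₁} n q_i⁻¹}` onto the invariant vector `Ω`
gives `F^{c_{i₂}⁻¹, q_{i₂} m n q_i⁻¹} Ω`, because `m ∈ N_C` commutes with `r_C`. After substituting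
`p = m n`, the coefficient of `F^{c_{i₂}⁻¹, q_{i₂} p q_i⁻¹} Ω` is a convolution of matrix coefficients
of `R`, which the Schur orthogonality relations reduce to `(|N_C| / d_R) · conj (R^{j₂ j}(p))`.
-/

open Matrix

section Schur

variable {N : Type*} [Group N] [Fintype N] {d : ℕ} (R : N →* Matrix (Fin d) (Fin d) ℂ)

/-- Irreducibility of `R`, in the form given by Schur's lemma. -/
def HasScalarCommutant : Prop :=
  ∀ M : Matrix (Fin d) (Fin d) ℂ, (∀ m, R m * M = M * R m) → ∃ z : ℂ, M = z • 1

theorem mul_sum_conj_eq_sum_conj_mul (X : Matrix (Fin d) (Fin d) ℂ) (n : N) :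
    R n * ∑ m, R m * X * R m⁻¹ = (∑ m, R m * X * R m⁻¹) * R n := by
  rw [Finset.mul_sum, Finset.sum_mul]
  refine Fintype.sum_equiv (Equiv.mulLeft n) _ _ fun m => ?_
  have hinv : R n⁻¹ * R n = 1 := by rw [← map_mul, inv_mul_cancel, map_one]
  simp only [Equiv.coe_mulLeft, _root_.mul_inv_rev, map_mul, mul_assoc, hinv, mul_one]

theorem trace_sum_conj (X : Matrix (Fin d) (Fin d) ℂ) :
    trace (∑ m, R m * X * R m⁻¹) = Fintype.card N * trace X := by
  simp only [trace_sum, trace_mul_cycle, ← map_mul, inv_mul_cancel, map_one, one_mul,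
    Finset.sum_const, Finset.card_univ, nsmul_eq_mul]

variable {R}

theorem sum_conj_eq_smul_one (hd : 0 < d) (hR : HasScalarCommutant R)
    (X : Matrix (Fin d) (Fin d) ℂ) :
    ∑ m, R m * X * R m⁻¹ = (Fintype.card N * trace X / d : ℂ) • 1 := by
  -- Schur's lemma makes the average a scalar, and the trace determines the scalar.
  obtain ⟨z, hz⟩ := hR _ (mul_sum_conj_eq_sum_conj_mul R X)
  have htrace := trace_sum_conj R X
  rw [hz, trace_smul, trace_one, Fintype.card_fin, smul_eq_mul] at htrace
  rw [hz, ← htrace, mul_div_cancel_right₀ _ (by exact_mod_cast hd.ne')]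

theorem sum_apply_mul_inv_apply (hd : 0 < d) (hR : HasScalarCommutant R)
    (a b c e : Fin d) :
    ∑ m, R m a b * R m⁻¹ c e = if b = c ∧ a = e then (Fintype.card N / d : ℂ) else 0 := by
  have hscalar := congr_fun₂ (sum_conj_eq_smul_one hd hR (single b c 1)) a e
  have hentry (m : N) :
      (R m * single b c (1 : ℂ) * R m⁻¹ : Matrix (Fin d) (Fin d) ℂ) a e = R m a b * R m⁻¹ c e := by
    simp [mul_apply, single, ite_and, Finset.sum_ite_eq]
  simp only [Matrix.sum_apply, hentry, Matrix.smul_apply, one_apply, smul_eq_mul] at hscalar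
  rw [hscalar]
  by_cases hbc : b = c
  · subst hbc
    by_cases hae : a = e <;> simp [hae]
  · simp [hbc, trace_single_eq_of_ne _ _ _ hbc]

theorem sum_apply_mul_inv_mul_apply (hd : 0 < d) (hR : HasScalarCommutant R)
    (a b e : Fin d) (p : N) :
    ∑ m, R m a b * R (m⁻¹ * p) b e = (Fintype.card N / d : ℂ) * R p a e := by
  simp only [map_mul, mul_apply, Finset.mul_sum]
  rw [Finset.sum_comm]
  simp only [← mul_assoc, ← Finset.sum_mul, sum_apply_mul_inv_apply hd hR, true_and]
  simp

theorem sum_sum_star_mul_star_smul {V : Type*} [AddCommMonoid V] [Module ℂ V] (hd : 0 < d) (hR : HasScalarCommutant R)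
    (a b e : Fin d) (f : N → V) :
    ∑ m, ∑ n, (star (R m a b) * star (R n b e)) • f (m * n) =
      (Fintype.card N / d : ℂ) • ∑ p, star (R p a e) • f p := by
  have hshift : ∀ m, ∑ n, (star (R m a b) * star (R n b e)) • f (m * n) =
      ∑ p, (star (R m a b) * star (R (m⁻¹ * p) b e)) • f p :=
    fun m => Fintype.sum_equiv (Equiv.mulLeft m) _ _ (by simp)
  simp_rw [hshift]
  rw [Finset.sum_comm, Finset.smul_sum]
  simp_rw [← Finset.sum_smul, ← star_mul', ← star_sum, sum_apply_mul_inv_mul_apply hd hR, smul_smul,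
    star_mul', star_div₀, star_natCast]

end Schur

theorem conj_inv_conj_of_commute {G : Type*} [Group G] {r m : G} (h : Commute m r) (q₁ q₂ : G) :
    (q₂ * m * q₁⁻¹) * (q₁ * r * q₁⁻¹)⁻¹ * (q₂ * m * q₁⁻¹)⁻¹ = (q₂ * r * q₂⁻¹)⁻¹ := by
  have hm : m * r⁻¹ * m⁻¹ = r⁻¹ := by rw [h.inv_right.eq, mul_inv_cancel_right]
  calc _ = q₂ * (m * r⁻¹ * m⁻¹) * q₂⁻¹ := by group
    _ = _ := by rw [hm]; group

theorem quantum_double_label_changer_on_ground_state_general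
    {G : Type*} [Group G]
    {H : Type*} [NormedAddCommGroup H] [InnerProductSpace ℂ H]
    -- ribbon operators and gauge transformations at the initial site
    (F : G → G → H →L[ℂ] H) (A : G → H →L[ℂ] H)
    (hAF : ∀ k h g : G, A k * F h g = F (k * h * k⁻¹) (k * g) * A k)
    -- the ground state vector
    (Ω : H) (hΩA : ∀ k : G, A k Ω = Ω)
    -- the conjugacy class `C = {c_1, …, c_{|C|}}`, representative `r_C`, iterators `q_i`
    (r : G) (nC : ℕ) (c : Fin nC → G) (q : Fin nC → G)
    (hq : ∀ i, c i = q i * r * (q i)⁻¹)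
    -- the centralizer `N_C` of `r_C` in `G`
    (N : Subgroup G) [Fintype N] (hN : N = Subgroup.centralizer {r})
    -- an irreducible unitary matrix representation `R` of `N_C` of dimension `d_R`
    (dR : ℕ) (hdR : 0 < dR)
    (R : N →* Matrix (Fin dR) (Fin dR) ℂ)
    (hRirr : ∀ M : Matrix (Fin dR) (Fin dR) ℂ,
      (∀ m, R m * M = M * R m) → ∃ z : ℂ, M = z • (1 : Matrix (Fin dR) (Fin dR) ℂ))
    -- the ribbon operators in the representation basis
    (FRC : Fin nC × Fin dR → Fin nC × Fin dR → H →L[ℂ] H)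
    (hFRC : ∀ u v : Fin nC × Fin dR, FRC u v =
      ((dR : ℂ) / (Fintype.card N : ℂ)) •
        ∑ m : N, star (R m u.2 v.2) • F (c u.1)⁻¹ (q u.1 * (m : G) * (q v.1)⁻¹))
    -- the label changers `A^{RC;u₂u₁}`
    (ARC : Fin nC × Fin dR → Fin nC × Fin dR → H →L[ℂ] H)
    (hARC : ∀ u₂ u₁ : Fin nC × Fin dR, ARC u₂ u₁ =
      ((dR : ℂ) / (Fintype.card N : ℂ)) •
        ∑ m : N, star (R m u₂.2 u₁.2) • A (q u₂.1 * (m : G) * (q u₁.1)⁻¹)) :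
    ∀ u₁ u₂ v : Fin nC × Fin dR, ARC u₂ u₁ (FRC u₁ v Ω) = FRC u₂ v Ω := by
  rintro ⟨i₁, j₁⟩ ⟨i₂, j₂⟩ ⟨i, j⟩
  have hmove (m n : N) : A (q i₂ * m * (q i₁)⁻¹) (F (c i₁)⁻¹ (q i₁ * n * (q i)⁻¹) Ω) =
      F (c i₂)⁻¹ (q i₂ * ↑(m * n) * (q i)⁻¹) Ω := by
    have hmr : Commute (m : G) r := Subgroup.mem_centralizer_singleton_iff.mp (hN ▸ m.2)
    rw [← mul_apply_eq_comp, hAF, mul_apply_eq_comp, hΩA, hq, hq,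
      conj_inv_conj_of_commute hmr]
    congr 2
    simp only [Subgroup.coe_mul]
    group
  set κ : ℂ := dR / Fintype.card N
  have hκ : κ * κ * (Fintype.card N / dR) = κ := by
    have : (dR : ℂ) ≠ 0 := by exact_mod_cast hdR.ne'
    simp only [κ]
    field_simp
  calc ARC (i₂, j₂) (i₁, j₁) (FRC (i₁, j₁) (i, j) Ω)
      = (κ * κ) • ∑ m : N, ∑ n : N, (star (R m j₂ j₁) * star (R n j₁ j)) •
          F (c i₂)⁻¹ (q i₂ * ↑(m * n) * (q i)⁻¹) Ω := by
        simp only [hARC, hFRC, _root_.smul_apply, _root_.sum_apply,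
          map_smul, map_sum, hmove, Finset.smul_sum, smul_smul]
        rw [Finset.sum_comm]
        refine Finset.sum_congr rfl fun m _ => Finset.sum_congr rfl fun n _ => ?_
        ring_nf
    _ = FRC (i₂, j₂) (i, j) Ω := by
        rw [sum_sum_star_mul_star_smul hdR hRirr j₂ j₁ j
          (fun p : N => F (c i₂)⁻¹ (q i₂ * ↑p * (q i)⁻¹) Ω), smul_smul, hκ, hFRC]
        simp only [_root_.smul_apply, _root_.sum_apply]

/-- For a ribbon ending at a site where the gauge transformations `A^k` act,
with ground-state vector `Ω` (fixed by all `A^k`), the label changer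
`A^{RC;u₂u₁} = (d_R/|N_C|) Σ_m conj(R^{j₂j₁}(m)) A^{q_{i₂} m q_{i₁}⁻¹}` satisfies
`A^{RC;u₂u₁} F^{RC;u₁v} Ω = F^{RC;u₂v} Ω` for all `u₁, u₂, v ∈ I_{RC}`. -/
theorem quantum_double_label_changer_on_ground_state
    {G : Type*} [Group G] [Fintype G]
    {H : Type*} [NormedAddCommGroup H] [InnerProductSpace ℂ H]
    -- ribbon operators and gauge transformations at the initial site
    (F : G → G → H →L[ℂ] H) (A : G → H →L[ℂ] H)
    (hA1 : A 1 = 1)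
    (hAmul : ∀ k l : G, A k * A l = A (k * l))
    (hAF : ∀ k h g : G, A k * F h g = F (k * h * k⁻¹) (k * g) * A k)
    -- the ground state vector
    (Ω : H) (hΩA : ∀ k : G, A k Ω = Ω)
    -- the conjugacy class `C = {c_1, …, c_{|C|}}`, representative `r_C`, iterators `q_i`
    (r : G) (nC : ℕ) (c : Fin nC → G) (q : Fin nC → G)
    (hcinj : Function.Injective c)
    (hcclass : ∀ g : G, IsConj r g ↔ ∃ i, c i = g)
    (hq : ∀ i, c i = q i * r * (q i)⁻¹)
    -- the centralizer `N_C` of `r_C` in `G`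
    (N : Subgroup G) [Fintype N] (hN : N = Subgroup.centralizer {r})
    -- an irreducible unitary matrix representation `R` of `N_C` of dimension `d_R`
    (dR : ℕ) (hdR : 0 < dR)
    (R : N →* Matrix (Fin dR) (Fin dR) ℂ)
    (hRunitary : ∀ m, R m * star (R m) = 1)
    (hRirr : ∀ M : Matrix (Fin dR) (Fin dR) ℂ,
      (∀ m, R m * M = M * R m) → ∃ z : ℂ, M = z • (1 : Matrix (Fin dR) (Fin dR) ℂ))
    -- the ribbon operators in the representation basis
    (FRC : Fin nC × Fin dR → Fin nC × Fin dR → H →L[ℂ] H)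
    (hFRC : ∀ u v : Fin nC × Fin dR, FRC u v =
      ((dR : ℂ) / (Fintype.card N : ℂ)) •
        ∑ m : N, star (R m u.2 v.2) • F (c u.1)⁻¹ (q u.1 * (m : G) * (q v.1)⁻¹))
    -- the label changers `A^{RC;u₂u₁}`
    (ARC : Fin nC × Fin dR → Fin nC × Fin dR → H →L[ℂ] H)
    (hARC : ∀ u₂ u₁ : Fin nC × Fin dR, ARC u₂ u₁ =
      ((dR : ℂ) / (Fintype.card N : ℂ)) •
        ∑ m : N, star (R m u₂.2 u₁.2) • A (q u₂.1 * (m : G) * (q u₁.1)⁻¹)) :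
    ∀ u₁ u₂ v : Fin nC × Fin dR, ARC u₂ u₁ (FRC u₁ v Ω) = FRC u₂ v Ω :=
  quantum_double_label_changer_on_ground_state_general F A hAF Ω hΩA r nC c q hq N hN dR hdR R hRirr
    FRC hFRC ARC hARC
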